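/- The polynomials t, z_2, ..., z_d are algebraically independent over ℂ, where z_i = Σ_{k=0}^{i−2} (−1)^k C(i,k) x_{i−k} x_1^k t^{i−k−1} + (i−1)(−1)^{i+1} x_1^i in ℂ[t, x_1, ..., x_d]. -/

import Mathlib

/-!
Specialise `x₁ ↦ 0` in a field `K` containing algebraically independent `y₀, …, y_{d-1}`:
every `z_i` collapses to its `k = 0` term `x_i t^{i-1}`. Sending moreover `t ↦ y₀` and
`x_{j+1} ↦ y_j / y₀^j` maps `t, z_2, …, z_d` to `y₀, …, y_{d-1}`, so any polynomial relation
among them would be one among the `y_j`. Take `K` the fraction field of `ℂ[y₀, …, y_{d-1}]`.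
-/

open MvPolynomial

open Fin.NatCast in
/-- The semi-invariant
`z_i = Σ_{k=0}^{i-2} (-1)^k C(i,k) x_{i-k} x_1^k t^{i-k-1} + (i-1)(-1)^{i+1} x_1^i`
in `ℂ[t, x_1, …, x_d]`, where the variable of index `0` is `t`. -/
noncomputable def z (d i : ℕ) : MvPolynomial (Fin (d+1)) ℂ :=
  (∑ k ∈ Finset.range (i-1), ((-1:ℂ)^k * (i.choose k : ℂ)) •
      (X (((i-k : ℕ)) : Fin (d+1)) * X 1 ^ k * X 0 ^ (i-k-1))) +
  (((i-1 : ℕ) : ℂ) * (-1:ℂ)^(i+1)) • (X 1 ^ i : MvPolynomial (Fin (d+1)) ℂ)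

/-- The family `t, z_2, …, z_d` indexed by `Fin d`: index `0` gives `t`,
index `j ≥ 1` gives `z_{j+1}`. -/
noncomputable def tzFamily (d : ℕ) : Fin d → MvPolynomial (Fin (d+1)) ℂ :=
  fun j => if (j : ℕ) = 0 then X 0 else z d ((j : ℕ) + 1)

open Fin.NatCast in
theorem aeval_z_of_apply_one_eq_zero {A : Type*} [CommSemiring A] [Algebra ℂ A] {d i : ℕ}
    (v : Fin (d+1) → A) (hv : v 1 = 0) (hi : i ≠ 0) :
    aeval v (z d i) = v (i : Fin (d+1)) * v 0 ^ (i - 1) := by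
  have hterm (k : ℕ) (hk : k ≠ 0) :
      aeval v (X ((i - k : ℕ) : Fin (d+1)) * X 1 ^ k * X 0 ^ (i - k - 1) :
        MvPolynomial (Fin (d+1)) ℂ) = 0 := by
    simp [hv, zero_pow hk]
  rcases Nat.lt_or_ge i 2 with hi1 | hi2
  · obtain rfl : i = 1 := by omega
    simp [z, hv]
  · rw [z, map_add, map_sum, Finset.sum_eq_single_of_mem 0 (Finset.mem_range.mpr (by omega))
      (fun k _ hk => by rw [map_smul, hterm k hk, smul_zero])]
    simp [hv, zero_pow hi]

theorem tzFamily_zero (d : ℕ) [NeZero d] : tzFamily d 0 = X 0 := by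
  simp [tzFamily]

theorem tzFamily_of_val_ne_zero {d : ℕ} {j : Fin d} (hj : (j : ℕ) ≠ 0) :
    tzFamily d j = z d ((j : ℕ) + 1) :=
  if_neg hj

/-- The point `t = y₀, x₁ = 0, x_{j+1} = y_j / y₀^j` of `K^{d+1}`. -/
noncomputable def tzPoint {K : Type*} [Field K] {d : ℕ} [NeZero d] (y : Fin d → K) :
    Fin (d+1) → K :=
  Fin.cons (y 0) fun i => if i = 0 then 0 else y i / y 0 ^ (i : ℕ)

open Fin.NatCast in
theorem aeval_tzPoint_tzFamily {K : Type*} [Field K] [Algebra ℂ K] {d : ℕ} [NeZero d]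
    (y : Fin d → K) (hy : y 0 ≠ 0) (j : Fin d) : aeval (tzPoint y) (tzFamily d j) = y j := by
  by_cases hj : (j : ℕ) = 0
  · obtain rfl : j = 0 := Fin.ext hj
    simp [tzFamily_zero, tzPoint]
  · have hv1 : tzPoint y 1 = 0 := by
      rw [← Fin.succ_zero_eq_one', tzPoint, Fin.cons_succ, if_pos rfl]
    have hsucc : (((j : ℕ) + 1 : ℕ) : Fin (d+1)) = j.succ := Fin.ext (by simp)
    rw [tzFamily_of_val_ne_zero hj, aeval_z_of_apply_one_eq_zero _ hv1 (Nat.succ_ne_zero _),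
      hsucc, tzPoint, Fin.cons_succ, Fin.cons_zero, if_neg (Fin.val_ne_zero_iff.mp hj),
      Nat.succ_sub_one, div_mul_cancel₀ _ (pow_ne_zero _ hy)]

theorem algebraicIndependent_tzFamily_of_algebraicIndependent {K : Type*} [Field K]
    [Algebra ℂ K] {d : ℕ} [NeZero d] {y : Fin d → K} (hy : AlgebraicIndependent ℂ y) :
    AlgebraicIndependent ℂ (tzFamily d) := by
  have h : aeval (tzPoint y) ∘ tzFamily d = y := funext (aeval_tzPoint_tzFamily y (hy.ne_zero 0))
  rw [← h] at hy
  exact hy.of_comp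

theorem stmt3 (d : ℕ) (hd : 2 ≤ d) :
    AlgebraicIndependent ℂ (tzFamily d) := by
  have : NeZero d := ⟨by omega⟩
  let P := MvPolynomial (Fin d) ℂ
  exact algebraicIndependent_tzFamily_of_algebraicIndependent
    ((algebraicIndependent_X (Fin d) ℂ).map' (f := IsScalarTower.toAlgHom ℂ P (FractionRing P))
      (IsFractionRing.injective P (FractionRing P)))
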